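/- arXiv:2310.11428 — 2 statements merged into one kernel-verified Lean document; each statement's English description precedes it below -/
import Mathlib

section
/- Let θ ∼ N(μ′, Σ) be a Gaussian random vector in ℝ^d, and define ℓ_BC(θ) = ½‖θ − μ‖² and the cliff reward J with parameters C ≫ ε² > 0 and optimum θ* = μ. Then there exists a universal constant c₁ > 0 such that J(θ*) − E[J(θ)] ≥ C/2 whenever E[ℓ_BC(θ)] ≥ c₁·ε² (assuming C is larger than an absolute multiple of ε²). -/
open MeasureTheory ProbabilityTheory

/-- The standard Gaussian measure on `ℝ^d` (i.i.d. `N(0,1)` coordinates). -/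
noncomputable def stdGaussianPi (d : ℕ) : Measure (Fin d → ℝ) :=
  Measure.pi fun _ => gaussianReal 0 1

/-- `ν` is the law of a (possibly degenerate) Gaussian random vector in `ℝ^d` with mean `μ'`:
the pushforward of the standard Gaussian under the affine map `z ↦ μ' + A z` (so the covariance
is `Σ = A Aᵀ`). -/
def IsGaussianLaw {d : ℕ} (ν : Measure (Fin d → ℝ)) (μ' : Fin d → ℝ) : Prop :=
  ∃ A : Matrix (Fin d) (Fin d) ℝ,
    ν = Measure.map (fun z => μ' + A.mulVec z) (stdGaussianPi d)

/-- Squared Euclidean norm on `ℝ^d`. -/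
noncomputable def sqnorm {d : ℕ} (v : Fin d → ℝ) : ℝ := ∑ i, v i ^ 2

/-- The cliff reward on `ℝ^d` with target `μ` and parameters `ε, C`:
`J(θ) = −‖θ−μ‖²` if `‖θ − μ‖ ≤ ε`, and `J(θ) = −C` otherwise; `J(μ) = 0`. -/
noncomputable def cliffJVec {d : ℕ} (μ : Fin d → ℝ) (ε C : ℝ) (θ : Fin d → ℝ) : ℝ :=
  if Real.sqrt (sqnorm (θ - μ)) ≤ ε then -sqnorm (θ - μ) else -C

/-!
Write `θ - μ = v + B z` with `z` standard Gaussian, where `B = A Q` for an orthogonal `Q`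
chosen so that `Bᵀ B = diag λ`; rotation invariance of `z` makes this legitimate, and then
`‖B z‖² = ∑ λⱼ zⱼ²`. Suppose the `ε`-ball around `μ` has probability `> 1/2`. As `z` and `-z`
have the same law, the events `‖v + B z‖ ≤ ε` and `‖v - B z‖ ≤ ε` intersect, which forces
`‖v‖ ≤ ε`; hence `∑ λⱼ zⱼ² ≤ 4ε²` with probability `> 1/2`. A Chernoff bound, with
`E exp(-t λ z²) = (1 + 2tλ)^(-1/2)` and `∏ (1 + xⱼ) ≥ 1 + ∑ xⱼ`, turns this into
`∑ λⱼ ≤ 60ε²`, so `E ‖θ - μ‖² ≤ 2‖v‖² + 2 ∑ λⱼ ≤ 122ε²`. Consequently, once `E ℓ_BC ≥ 62ε²`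
the reward falls off the cliff with probability at least `1/2`, and `E J ≤ -C/2`.
-/

open Real Matrix

section SquaredNorm

variable {d : ℕ}

lemma sqnorm_nonneg (v : Fin d → ℝ) : 0 ≤ sqnorm v :=
  Finset.sum_nonneg fun _ _ => sq_nonneg _

lemma sqnorm_neg (v : Fin d → ℝ) : sqnorm (-v) = sqnorm v := by
  simp [sqnorm]

lemma sqnorm_add_add_sqnorm_sub (v w : Fin d → ℝ) :
    sqnorm (v + w) + sqnorm (v - w) = 2 * (sqnorm v + sqnorm w) := by
  simp only [sqnorm, Pi.add_apply, Pi.sub_apply, ← Finset.sum_add_distrib, Finset.mul_sum]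
  exact Finset.sum_congr rfl fun _ _ => by ring

lemma sqnorm_add_le (v w : Fin d → ℝ) : sqnorm (v + w) ≤ 2 * sqnorm v + 2 * sqnorm w := by
  linarith [sqnorm_add_add_sqnorm_sub v w, sqnorm_nonneg (v - w)]

lemma sqnorm_le_of_sqnorm_add_le_of_sqnorm_sub_le {v w : Fin d → ℝ} {a : ℝ}
    (hadd : sqnorm (v + w) ≤ a) (hsub : sqnorm (v - w) ≤ a) : sqnorm v ≤ a := by
  linarith [sqnorm_add_add_sqnorm_sub v w, sqnorm_nonneg w]

@[fun_prop]
lemma measurable_sqnorm : Measurable (sqnorm : (Fin d → ℝ) → ℝ) := by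
  unfold sqnorm
  fun_prop

lemma sqnorm_mulVec_of_transpose_mul_eq_diagonal {B : Matrix (Fin d) (Fin d) ℝ}
    {Λ : Fin d → ℝ} (hB : Bᵀ * B = diagonal Λ) (z : Fin d → ℝ) :
    sqnorm (B *ᵥ z) = ∑ j, Λ j * z j ^ 2 := by
  have hdot : sqnorm (B *ᵥ z) = (B *ᵥ z) ⬝ᵥ (B *ᵥ z) := by
    simp [sqnorm, dotProduct, sq]
  rw [hdot, dotProduct_mulVec, ← mulVec_transpose, mulVec_mulVec, hB]
  simp only [dotProduct, mulVec_diagonal]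
  exact Finset.sum_congr rfl fun _ _ => by ring

lemma nonneg_of_transpose_mul_eq_diagonal {B : Matrix (Fin d) (Fin d) ℝ}
    {Λ : Fin d → ℝ} (hB : Bᵀ * B = diagonal Λ) (j : Fin d) : 0 ≤ Λ j := by
  calc 0 ≤ sqnorm (B *ᵥ Pi.single j 1) := sqnorm_nonneg _
    _ = Λ j := by
      rw [sqnorm_mulVec_of_transpose_mul_eq_diagonal hB]
      simp [Pi.single_apply]

end SquaredNorm

lemma exists_orthogonal_transpose_mul_eq_diagonal {d : ℕ} (A : Matrix (Fin d) (Fin d) ℝ) :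
    ∃ Q ∈ orthogonalGroup (Fin d) ℝ, ∃ Λ : Fin d → ℝ, (A * Q)ᵀ * (A * Q) = diagonal Λ := by
  have hM : (Aᵀ * A).IsHermitian := by
    simpa using isHermitian_conjTranspose_mul_self A
  refine ⟨hM.eigenvectorUnitary, hM.eigenvectorUnitary.2, hM.eigenvalues, ?_⟩
  have hdiag := hM.conjStarAlgAut_star_eigenvectorUnitary
  simp only [Unitary.conjStarAlgAut_star_apply, star_eq_conjTranspose,
    conjTranspose_eq_transpose_of_trivial] at hdiag
  rw [transpose_mul]
  convert hdiag using 1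
  · simp only [Matrix.mul_assoc]
  · simp [RCLike.ofReal_real_eq_id]

lemma Finset.one_add_sum_le_prod_one_add {ι R : Type*} [CommSemiring R] [PartialOrder R]
    [IsOrderedRing R] (s : Finset ι) {f : ι → R} (hf : ∀ i ∈ s, 0 ≤ f i) :
    1 + ∑ i ∈ s, f i ≤ ∏ i ∈ s, (1 + f i) := by
  classical
  induction s using Finset.induction_on with
  | empty => simp
  | insert a s ha ih =>
    have hfa := hf a (Finset.mem_insert_self a s)
    have hs := ih fun i hi => hf i (Finset.mem_insert_of_mem hi)
    have hsum : 0 ≤ ∑ i ∈ s, f i :=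
      Finset.sum_nonneg fun i hi => hf i (Finset.mem_insert_of_mem hi)
    rw [Finset.sum_insert ha, Finset.prod_insert ha]
    calc 1 + (f a + ∑ i ∈ s, f i) ≤ 1 + (f a + ∑ i ∈ s, f i) + f a * ∑ i ∈ s, f i :=
          le_add_of_nonneg_right (mul_nonneg hfa hsum)
      _ = (1 + f a) * (1 + ∑ i ∈ s, f i) := by ring
      _ ≤ (1 + f a) * ∏ i ∈ s, (1 + f i) :=
          mul_le_mul_of_nonneg_left hs (add_nonneg zero_le_one hfa)

lemma integral_exp_neg_mul_sq_gaussianReal {c : ℝ} (hc : 0 ≤ c) :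
    ∫ x, exp (-(c * x ^ 2)) ∂gaussianReal 0 1 = (√(1 + 2 * c))⁻¹ := by
  have hpdf : ∀ x, gaussianPDFReal 0 1 x • exp (-(c * x ^ 2))
      = (√(2 * π))⁻¹ * exp (-(c + 1 / 2) * x ^ 2) := fun x => by
    simp only [gaussianPDFReal, smul_eq_mul, NNReal.coe_one, mul_one, sub_zero, mul_assoc,
      ← exp_add]
    ring_nf
  simp_rw [integral_gaussianReal_eq_integral_smul one_ne_zero, hpdf, integral_const_mul,
    integral_gaussian]
  rw [sqrt_div' _ (by positivity : (0 : ℝ) ≤ c + 1 / 2),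
    show 1 + 2 * c = 2 * (c + 1 / 2) by ring, sqrt_mul zero_le_two, sqrt_mul zero_le_two]
  have : √π ≠ 0 := by positivity
  field_simp

lemma integral_sq_gaussianReal (μ : ℝ) (v : NNReal) :
    ∫ x, x ^ 2 ∂gaussianReal μ v = μ ^ 2 + v := by
  have h := variance_eq_sub (memLp_id_gaussianReal (μ := μ) (v := v) 2)
  simp only [variance_id_gaussianReal, id_eq, Pi.pow_apply, integral_id_gaussianReal] at h
  linarith

section StdGaussianPi

variable {d : ℕ}

instance : IsProbabilityMeasure (stdGaussianPi d) := by
  unfold stdGaussianPi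
  infer_instance

lemma stdGaussianPi_eq_map_ofLp :
    stdGaussianPi d = (stdGaussian (EuclideanSpace ℝ (Fin d))).map WithLp.ofLp := by
  rw [← map_pi_eq_stdGaussian, Measure.map_map (by fun_prop) (by fun_prop)]
  exact Measure.map_id.symm

lemma stdGaussianPi_map_mulVec {Q : Matrix (Fin d) (Fin d) ℝ}
    (hQ : Q ∈ orthogonalGroup (Fin d) ℝ) :
    (stdGaussianPi d).map (fun z => Q *ᵥ z) = stdGaussianPi d := by
  let U := Unitary.linearIsometryEquiv ⟨toEuclideanCLM (𝕜 := ℝ) Q, Unitary.map_mem _ hQ⟩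
  have hcomp : (fun z => Q *ᵥ z) ∘ WithLp.ofLp = WithLp.ofLp ∘ U := by
    funext x
    show _ = (toEuclideanCLM (𝕜 := ℝ) Q x).ofLp
    simp
  rw [stdGaussianPi_eq_map_ofLp, Measure.map_map (by fun_prop) (by fun_prop), hcomp,
    ← Measure.map_map (by fun_prop) (by fun_prop), stdGaussian_map]

lemma stdGaussianPi_map_neg : (stdGaussianPi d).map (fun z => -z) = stdGaussianPi d := by
  have hneg : (-1 : Matrix (Fin d) (Fin d) ℝ) ∈ orthogonalGroup (Fin d) ℝ := by
    simp [mem_orthogonalGroup_iff]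
  have h := stdGaussianPi_map_mulVec hneg
  simp only [neg_mulVec, one_mulVec] at h
  exact h

lemma map_add_mulVec_mul_stdGaussianPi (m : Fin d → ℝ) (A : Matrix (Fin d) (Fin d) ℝ)
    {Q : Matrix (Fin d) (Fin d) ℝ} (hQ : Q ∈ orthogonalGroup (Fin d) ℝ) :
    (stdGaussianPi d).map (fun z => m + (A * Q) *ᵥ z)
      = (stdGaussianPi d).map (fun z => m + A *ᵥ z) := by
  conv_rhs => rw [← stdGaussianPi_map_mulVec hQ]
  rw [Measure.map_map (by fun_prop) (by fun_prop)]
  simp only [Function.comp_def, mulVec_mulVec]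

lemma integrable_sq_eval_stdGaussianPi (j : Fin d) :
    Integrable (fun z => z j ^ 2) (stdGaussianPi d) :=
  integrable_comp_eval (μ := fun _ => gaussianReal 0 1) (f := fun x => x ^ 2)
    (memLp_id_gaussianReal 2).integrable_sq

lemma integrable_sum_mul_sq_stdGaussianPi (Λ : Fin d → ℝ) :
    Integrable (fun z => ∑ j, Λ j * z j ^ 2) (stdGaussianPi d) :=
  integrable_finsetSum _ fun j _ => (integrable_sq_eval_stdGaussianPi j).const_mul _

lemma integral_sum_mul_sq_stdGaussianPi (Λ : Fin d → ℝ) :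
    ∫ z, ∑ j, Λ j * z j ^ 2 ∂stdGaussianPi d = ∑ j, Λ j := by
  rw [integral_finsetSum _ fun j _ => (integrable_sq_eval_stdGaussianPi j).const_mul _]
  refine Finset.sum_congr rfl fun j _ => ?_
  rw [integral_const_mul, stdGaussianPi,
    integral_comp_eval (μ := fun _ => gaussianReal 0 1) (f := fun x => x ^ 2) (by fun_prop),
    integral_sq_gaussianReal]
  simp

lemma integral_exp_neg_sum_mul_sq_stdGaussianPi {Λ : Fin d → ℝ} (hΛ : ∀ j, 0 ≤ Λ j) :
    ∫ z, exp (-∑ j, Λ j * z j ^ 2) ∂stdGaussianPi d = (√(∏ j, (1 + 2 * Λ j)))⁻¹ := by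
  simp_rw [← Finset.sum_neg_distrib, exp_sum]
  rw [stdGaussianPi, integral_fintype_prod_eq_prod (fun j x => exp (-(Λ j * x ^ 2))),
    sqrt_prod _ fun j _ => by linarith [hΛ j], ← Finset.prod_inv_distrib]
  exact Finset.prod_congr rfl fun j _ => integral_exp_neg_mul_sq_gaussianReal (hΛ j)

end StdGaussianPi

section SmallBall

variable {d : ℕ}

lemma sum_le_of_half_lt_measureReal_sum_mul_sq_le {Λ : Fin d → ℝ} (hΛ : ∀ j, 0 ≤ Λ j)
    {a : ℝ} (ha : 0 < a) (h : 1 / 2 < (stdGaussianPi d).real {z | ∑ j, Λ j * z j ^ 2 ≤ a}) :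
    ∑ j, Λ j ≤ 15 * a := by
  set W : (Fin d → ℝ) → ℝ := fun z => ∑ j, Λ j * z j ^ 2
  have hS : 0 ≤ ∑ j, Λ j := Finset.sum_nonneg fun j _ => hΛ j
  have hint : Integrable (fun z => exp (-a⁻¹ * W z)) (stdGaussianPi d) := by
    refine Integrable.of_bound (by fun_prop) 1 (ae_of_all _ fun z => ?_)
    have hW : 0 ≤ W z := Finset.sum_nonneg fun j _ => mul_nonneg (hΛ j) (sq_nonneg _)
    rw [norm_of_nonneg (exp_pos _).le, exp_le_one_iff, neg_mul]
    exact neg_nonpos.mpr (mul_nonneg (inv_nonneg.mpr ha.le) hW)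
  have hchernoff : (stdGaussianPi d).real {z | W z ≤ a}
      ≤ exp 1 * (√(1 + 2 * ((∑ j, Λ j) / a)))⁻¹ := by
    calc (stdGaussianPi d).real {z | W z ≤ a}
        ≤ exp (-(-a⁻¹) * a) * mgf W (stdGaussianPi d) (-a⁻¹) :=
          measure_le_le_exp_mul_mgf a (neg_nonpos.mpr (inv_nonneg.mpr ha.le)) hint
      _ = exp 1 * (√(∏ j, (1 + 2 * (a⁻¹ * Λ j))))⁻¹ := by
          rw [neg_neg, inv_mul_cancel₀ ha.ne', mgf, ← integral_exp_neg_sum_mul_sq_stdGaussianPi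
            fun j => mul_nonneg (inv_nonneg.mpr ha.le) (hΛ j)]
          simp only [W, neg_mul, Finset.mul_sum, mul_assoc, Finset.sum_neg_distrib]
      _ ≤ exp 1 * (√(1 + 2 * ((∑ j, Λ j) / a)))⁻¹ := by
          have hprod := Finset.one_add_sum_le_prod_one_add Finset.univ
            fun j _ => mul_nonneg zero_le_two (mul_nonneg (inv_nonneg.mpr ha.le) (hΛ j))
          rw [← Finset.mul_sum, ← Finset.mul_sum, ← div_eq_inv_mul] at hprod
          gcongr
  have hsqrt_pos : 0 < √(1 + 2 * ((∑ j, Λ j) / a)) := sqrt_pos.mpr (by positivity)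
  have hsqrt : √(1 + 2 * ((∑ j, Λ j) / a)) < 2 * exp 1 := by
    have := h.trans_le hchernoff
    rw [← div_eq_mul_inv, lt_div_iff₀ hsqrt_pos] at this
    linarith
  rw [sqrt_lt' (by positivity)] at hsqrt
  -- `1 + 2 S / a < 4e² < 31`
  have hratio : (∑ j, Λ j) / a < 15 := by nlinarith [exp_one_lt_d9, exp_pos 1]
  exact ((div_lt_iff₀ ha).mp hratio).le

lemma sqnorm_le_of_half_lt_measureReal {v : Fin d → ℝ} {B : Matrix (Fin d) (Fin d) ℝ} {a : ℝ}
    (h : 1 / 2 < (stdGaussianPi d).real {z | sqnorm (v + B *ᵥ z) ≤ a}) : sqnorm v ≤ a := by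
  set E := {z | sqnorm (v + B *ᵥ z) ≤ a}
  have hE : MeasurableSet E := measurableSet_le (by fun_prop) measurable_const
  have hnegE : (stdGaussianPi d).real ((fun z => -z) ⁻¹' E) = (stdGaussianPi d).real E := by
    rw [← map_measureReal_apply measurable_neg hE, stdGaussianPi_map_neg]
  obtain ⟨z, hz, hz'⟩ := nonempty_inter_of_measureReal_lt_add (μ := stdGaussianPi d) (s := E)
    (u := Set.univ) (measurable_neg hE)
    (Set.subset_univ _) (Set.subset_univ _) (by rw [probReal_univ, hnegE]; linarith)
  refine sqnorm_le_of_sqnorm_add_le_of_sqnorm_sub_le (w := B *ᵥ z) hz ?_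
  simpa only [E, Set.mem_preimage, Set.mem_ofPred_eq, mulVec_neg, ← sub_eq_add_neg] using hz'

lemma integral_sqnorm_add_mulVec_le_of_half_lt_measureReal {v : Fin d → ℝ}
    {B : Matrix (Fin d) (Fin d) ℝ} {Λ : Fin d → ℝ} (hB : Bᵀ * B = diagonal Λ) {ε : ℝ}
    (hε : 0 < ε) (h : 1 / 2 < (stdGaussianPi d).real {z | sqnorm (v + B *ᵥ z) ≤ ε ^ 2}) :
    ∫ z, sqnorm (v + B *ᵥ z) ∂stdGaussianPi d ≤ 122 * ε ^ 2 := by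
  have hv : sqnorm v ≤ ε ^ 2 := sqnorm_le_of_half_lt_measureReal h
  have hΛ := nonneg_of_transpose_mul_eq_diagonal hB
  have hsmall : 1 / 2 < (stdGaussianPi d).real {z | ∑ j, Λ j * z j ^ 2 ≤ 4 * ε ^ 2} := by
    refine h.trans_le (measureReal_mono fun z (hz : sqnorm (v + B *ᵥ z) ≤ ε ^ 2) => ?_)
    have hBz := sqnorm_add_le (v + B *ᵥ z) (-v)
    rw [sqnorm_neg, add_neg_cancel_comm, sqnorm_mulVec_of_transpose_mul_eq_diagonal hB] at hBz
    show ∑ j, Λ j * z j ^ 2 ≤ 4 * ε ^ 2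
    linarith
  have htrace := sum_le_of_half_lt_measureReal_sum_mul_sq_le hΛ (by positivity) hsmall
  have hint := integrable_sum_mul_sq_stdGaussianPi (d := d) Λ
  calc ∫ z, sqnorm (v + B *ᵥ z) ∂stdGaussianPi d
      ≤ ∫ z, (2 * sqnorm v + 2 * ∑ j, Λ j * z j ^ 2) ∂stdGaussianPi d := by
        refine integral_mono_of_nonneg (ae_of_all _ fun z => sqnorm_nonneg _)
          ((integrable_const _).add (hint.const_mul 2)) (ae_of_all _ fun z => ?_)
        show sqnorm (v + B *ᵥ z) ≤ 2 * sqnorm v + 2 * ∑ j, Λ j * z j ^ 2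
        rw [← sqnorm_mulVec_of_transpose_mul_eq_diagonal hB]
        exact sqnorm_add_le _ _
    _ = 2 * sqnorm v + 2 * ∑ j, Λ j := by
        rw [integral_add (integrable_const _) (hint.const_mul 2), integral_const,
          integral_const_mul, integral_sum_mul_sq_stdGaussianPi]
        simp
    _ ≤ 122 * ε ^ 2 := by linarith

end SmallBall

section Cliff

variable {d : ℕ}

lemma cliffJVec_self (μ : Fin d → ℝ) {ε : ℝ} (hε : 0 ≤ ε) (C : ℝ) : cliffJVec μ ε C μ = 0 := by
  simp [cliffJVec, sqnorm, hε]

lemma integral_cliffJVec_le {ν : Measure (Fin d → ℝ)} [IsProbabilityMeasure ν] (μ : Fin d → ℝ)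
    {ε C : ℝ} (hC : 0 ≤ C) (h : ν.real {θ | √(sqnorm (θ - μ)) ≤ ε} ≤ 1 / 2) :
    ∫ θ, cliffJVec μ ε C θ ∂ν ≤ -(C / 2) := by
  set F := {θ | √(sqnorm (θ - μ)) ≤ ε}
  have hF : MeasurableSet F := measurableSet_le (by fun_prop) measurable_const
  have hJ : ∀ θ, cliffJVec μ ε C θ ≤ Fᶜ.indicator (fun _ => -C) θ := fun θ => by
    by_cases hθ : √(sqnorm (θ - μ)) ≤ ε
    · rw [Set.indicator_of_notMem (not_not.mpr hθ), cliffJVec, if_pos hθ]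
      exact neg_nonpos.mpr (sqnorm_nonneg _)
    · rw [Set.indicator_of_mem (show θ ∈ Fᶜ from hθ), cliffJVec, if_neg hθ]
  have hint : Integrable (cliffJVec μ ε C) ν := by
    refine Integrable.of_bound
      (Measurable.ite hF (by fun_prop) measurable_const).aestronglyMeasurable (ε ^ 2 + C)
      (ae_of_all _ fun θ => ?_)
    unfold cliffJVec
    split_ifs with hθ
    · have := (sqrt_le_iff.mp hθ).2
      rw [norm_neg, norm_of_nonneg (sqnorm_nonneg _)]
      linarith
    · rw [norm_neg, norm_of_nonneg hC]
      linarith [sq_nonneg ε]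
  calc ∫ θ, cliffJVec μ ε C θ ∂ν ≤ ∫ θ, Fᶜ.indicator (fun _ => -C) θ ∂ν :=
        integral_mono hint ((integrable_const _).indicator hF.compl) hJ
    _ = -(C * (1 - ν.real F)) := by
        rw [integral_indicator_const _ hF.compl, probReal_compl_eq_one_sub hF, smul_eq_mul]
        ring
    _ ≤ -(C / 2) := by nlinarith

end Cliff

/-- Let `θ ∼ N(μ′, Σ)` be a Gaussian random vector in `ℝ^d`, with
`ℓ_BC(θ) = ½‖θ − μ‖²` and the cliff reward `J` with parameters `C ≫ ε² > 0` and optimum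
`θ* = μ`. Then there is a universal constant `c₁ > 0` such that `J(θ*) − E[J(θ)] ≥ C/2`
whenever `E[ℓ_BC(θ)] ≥ c₁·ε²` (assuming `C` is larger than an absolute multiple of `ε²`). -/
theorem cliff_loss_large_when_bc_loss_large :
    ∃ c₁ K : ℝ, 0 < c₁ ∧ 0 < K ∧
      ∀ (d : ℕ) (ν : Measure (Fin d → ℝ)) (μ' : Fin d → ℝ), IsGaussianLaw ν μ' →
        ∀ (μ : Fin d → ℝ) (ε C : ℝ), 0 < ε → K * ε ^ 2 ≤ C →
          c₁ * ε ^ 2 ≤ ∫ x, (1 / 2) * sqnorm (x - μ) ∂ν →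
          cliffJVec μ ε C μ - (∫ x, cliffJVec μ ε C x ∂ν) ≥ C / 2 := by
  refine ⟨62, 1, by norm_num, one_pos, ?_⟩
  rintro d _ μ' ⟨A, rfl⟩ μ ε C hε hC hBC
  obtain ⟨Q, hQ, Λ, hΛ⟩ := exists_orthogonal_transpose_mul_eq_diagonal A
  rw [← map_add_mulVec_mul_stdGaussianPi μ' A hQ] at hBC ⊢
  have hT : Measurable fun z => μ' + (A * Q) *ᵥ z := by fun_prop
  have hshift : ∀ z, μ' + (A * Q) *ᵥ z - μ = (μ' - μ) + (A * Q) *ᵥ z := fun z => by abel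
  have := Measure.isProbabilityMeasure_map (μ := stdGaussianPi d) hT.aemeasurable
  suffices hF : ((stdGaussianPi d).map fun z => μ' + (A * Q) *ᵥ z).real
      {θ | √(sqnorm (θ - μ)) ≤ ε} ≤ 1 / 2 by
    have hC₀ : 0 ≤ C := by nlinarith
    linarith [integral_cliffJVec_le μ hC₀ hF, cliffJVec_self μ hε.le C]
  by_contra! hF
  rw [map_measureReal_apply hT (measurableSet_le (by fun_prop) measurable_const)] at hF
  have hball : (fun z => μ' + (A * Q) *ᵥ z) ⁻¹' {θ | √(sqnorm (θ - μ)) ≤ ε}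
      = {z | sqnorm ((μ' - μ) + (A * Q) *ᵥ z) ≤ ε ^ 2} := by
    ext z
    simp only [Set.mem_preimage, Set.mem_ofPred_eq, hshift, sqrt_le_left hε.le]
  rw [hball] at hF
  have hmoment := integral_sqnorm_add_mulVec_le_of_half_lt_measureReal hΛ hε hF
  rw [integral_map hT.aemeasurable (by fun_prop : Measurable _).aestronglyMeasurable] at hBC
  simp only [hshift, integral_const_mul] at hBC
  linarith [pow_pos hε 2]
end

section
/- Consider the one-dimensional cliff loss J with parameters C ≫ ε² > 0 and the mean-estimation SGD iterates with σ² = 1, b ≤ 1, a constant step size η ≥ c₁·ε², and let γ ≤ c₂·ε² with (1−γ)^{2T} ≤ γ (for suitable universal constants c₁, c₂). Then there exists a universal constant c₉ > 0 such that, even though E[J(θ*) − J(θ^{(T)})] ≥ C/2, the random SGD iterate satisfies P(J(θ*) − J(θ^{(T)}) ≤ γ) ≥ c₉·γ/η; that is, with probability at least Ω(γ/η) the un-averaged SGD iterate performs as well as the EMA iterate. -/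
open MeasureTheory ProbabilityTheory

/-- The SGD error iterates for mean estimation: `δ^{(0)} = δ0` and
`δ^{(t)} = (1−η)·δ^{(t−1)} − η·w^{(t−1)}`. -/
noncomputable def sgdErr {Ω : Type*} (η δ0 : ℝ) (w : ℕ → Ω → ℝ) : ℕ → Ω → ℝ
  | 0 => fun _ => δ0
  | (t + 1) => fun ω => (1 - η) * sgdErr η δ0 w t ω - η * w t ω

/-- The EMA error iterates: `δ̃^{(0)} = δ^{(0)}` and
`δ̃^{(t)} = (1−γ)·δ̃^{(t−1)} + γ·δ^{(t)}`. -/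
noncomputable def emaErr {Ω : Type*} (γ : ℝ) (δ : ℕ → Ω → ℝ) : ℕ → Ω → ℝ
  | 0 => δ 0
  | (t + 1) => fun ω => (1 - γ) * emaErr γ δ t ω + γ * δ (t + 1) ω

/-- The one-dimensional cliff reward with target `μ` and parameters `ε, C`:
`J(θ) = −(θ−μ)²` if `|θ − μ| ≤ ε`, and `J(θ) = −C` otherwise. In particular `J(μ) = 0`. -/
noncomputable def cliffJ (μ ε C θ : ℝ) : ℝ := if |θ - μ| ≤ ε then -(θ - μ) ^ 2 else -C

/-!
With Gaussian noise the error `δ^{(T)}` is exactly Gaussian, with mean `(1-η)^T δ^{(0)}` and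
variance `η (1 - (1-η)^{2T}) / (2-η) ∈ [η/4, η]`. Since `ε² ≪ η`, this Gaussian puts at most half
its mass on the cliff-free window `[-ε, ε]`, so the expected gap is at least `C/2`. On the other
hand `(1-η)^{2T} ≤ γ` puts the mean within `√γ` of the optimum, so the density on
`[-√γ, √γ]` is of order `1/√η`, and the gap is at most `γ` with probability of order
`√(γ/η) ≥ γ/η`.
-/

open Real
open scoped NNReal

section GaussianMass

variable {m : ℝ} {v : ℝ≥0}

lemma gaussianReal_real_le_volume_real_div (hv : v ≠ 0) {s : Set ℝ} (hs : MeasurableSet s)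
    (hs_fin : volume s ≠ ⊤) :
    (gaussianReal m v).real s ≤ volume.real s / √(2 * π * v) := by
  have hpdf_le : ∀ x ∈ s, gaussianPDFReal m v x ≤ (√(2 * π * v))⁻¹ := fun x _ => by
    rw [gaussianPDFReal]
    refine mul_le_of_le_one_right (by positivity) (exp_le_one_iff.mpr ?_)
    exact div_nonpos_of_nonpos_of_nonneg (neg_nonpos.mpr (sq_nonneg _)) (by positivity)
  calc (gaussianReal m v).real s = ∫ x in s, gaussianPDFReal m v x := by
        rw [measureReal_def, gaussianReal_apply_eq_integral _ hv, ENNReal.toReal_ofReal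
          (setIntegral_nonneg hs fun x _ => gaussianPDFReal_nonneg _ _ _)]
    _ ≤ ∫ _ in s, (√(2 * π * v))⁻¹ :=
        setIntegral_mono_on (integrable_gaussianPDFReal m v).integrableOn
          (integrableOn_const hs_fin) hs hpdf_le
    _ = volume.real s / √(2 * π * v) := by rw [setIntegral_const, smul_eq_mul, div_eq_mul_inv]

lemma two_mul_mul_le_gaussianReal_real_Icc (hv : v ≠ 0) {r : ℝ} (hr : 0 ≤ r) :
    2 * r * ((√(2 * π * v))⁻¹ * rexp (-(r + |m|) ^ 2 / (2 * v)))
      ≤ (gaussianReal m v).real (Set.Icc (-r) r) := by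
  have hpdf_ge : ∀ x ∈ Set.Icc (-r) r,
      (√(2 * π * v))⁻¹ * rexp (-(r + |m|) ^ 2 / (2 * v)) ≤ gaussianPDFReal m v x := by
    intro x hx
    have hdist : |x - m| ≤ r + |m| := (abs_sub x m).trans (by gcongr; exact abs_le.mpr hx)
    have hsq : (x - m) ^ 2 ≤ (r + |m|) ^ 2 := by rw [← sq_abs]; gcongr
    rw [gaussianPDFReal]
    gcongr
  calc 2 * r * ((√(2 * π * v))⁻¹ * rexp (-(r + |m|) ^ 2 / (2 * v)))
      = ∫ _ in Set.Icc (-r) r, (√(2 * π * v))⁻¹ * rexp (-(r + |m|) ^ 2 / (2 * v)) := by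
        rw [setIntegral_const, volume_real_Icc_of_le (by linarith), smul_eq_mul]
        ring
    _ ≤ ∫ x in Set.Icc (-r) r, gaussianPDFReal m v x :=
        setIntegral_mono_on (integrableOn_const measure_Icc_lt_top.ne)
          (integrable_gaussianPDFReal m v).integrableOn measurableSet_Icc hpdf_ge
    _ = (gaussianReal m v).real (Set.Icc (-r) r) := by
        rw [measureReal_def, gaussianReal_apply_eq_integral _ hv, ENNReal.toReal_ofReal
          (setIntegral_nonneg measurableSet_Icc fun x _ => gaussianPDFReal_nonneg _ _ _)]

lemma gaussianReal_real_Icc_le_half {ε : ℝ} (hε : 0 < ε) (hεv : 3 * ε ^ 2 ≤ v) :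
    (gaussianReal m v).real (Set.Icc (-ε) ε) ≤ 1 / 2 := by
  have hv : (0 : ℝ) < v := by nlinarith
  have hwidth : 4 * ε ≤ √(2 * π * v) := by
    rw [le_sqrt' (by positivity)]
    nlinarith [pi_gt_three]
  calc (gaussianReal m v).real (Set.Icc (-ε) ε)
      ≤ volume.real (Set.Icc (-ε) ε) / √(2 * π * v) :=
        gaussianReal_real_le_volume_real_div (by exact_mod_cast hv.ne') measurableSet_Icc
          measure_Icc_lt_top.ne
    _ = 2 * ε / √(2 * π * v) := by rw [volume_real_Icc_of_le (by linarith)]; ring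
    _ ≤ 1 / 2 := by rw [div_le_iff₀ (by positivity)]; linarith

lemma div_le_gaussianReal_real_Icc_sqrt {γ η : ℝ} (hγ : 0 < γ) (hm : |m| ≤ √γ)
    (hγv : 4 * γ ≤ v) (hvη : v ≤ η) (hγη : γ ≤ η) :
    γ / (3 * η) ≤ (gaussianReal m v).real (Set.Icc (-√γ) √γ) := by
  have hv : (0 : ℝ) < v := by linarith
  have hsγ : 0 < √γ := sqrt_pos.mpr hγ
  have hsv : 0 < √v := sqrt_pos.mpr hv
  have hexp : 1 / 2 ≤ rexp (-(√γ + |m|) ^ 2 / (2 * v)) := by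
    have hsq : (√γ + |m|) ^ 2 ≤ 4 * γ := by nlinarith [sq_sqrt hγ.le, abs_nonneg m]
    have hexponent : (√γ + |m|) ^ 2 / (2 * v) ≤ 1 / 2 := by
      rw [div_le_iff₀ (by positivity)]; linarith
    have := add_one_le_exp (-(√γ + |m|) ^ 2 / (2 * v))
    rw [neg_div] at this ⊢
    linarith
  have hnorm : √(2 * π * v) ≤ 3 * √v := by
    calc √(2 * π * v) ≤ √(3 ^ 2 * v) := sqrt_le_sqrt (by nlinarith [pi_lt_four])
      _ = 3 * √v := by rw [sqrt_mul (by norm_num), sqrt_sq (by norm_num)]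
  have hprod : √γ * √v ≤ η := by
    calc √γ * √v ≤ √η * √η := by gcongr
      _ = η := mul_self_sqrt (by linarith)
  calc γ / (3 * η) ≤ √γ / (3 * √v) := by
        rw [div_le_div_iff₀ (by linarith) (by positivity)]
        nlinarith [mul_self_sqrt hγ.le, mul_le_mul_of_nonneg_left hprod hsγ.le]
    _ = 2 * √γ * ((3 * √v)⁻¹ * (1 / 2)) := by ring
    _ ≤ 2 * √γ * ((√(2 * π * v))⁻¹ * rexp (-(√γ + |m|) ^ 2 / (2 * v))) := by
        gcongr
    _ ≤ (gaussianReal m v).real (Set.Icc (-√γ) √γ) :=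
        two_mul_mul_le_gaussianReal_real_Icc (by exact_mod_cast hv.ne') hsγ.le

end GaussianMass

section SGDLaw

variable {Ω : Type*} {η δ0 : ℝ}

lemma sgdErr_congr {Ω' : Type*} {w : ℕ → Ω → ℝ} {w' : ℕ → Ω' → ℝ} {ω : Ω} {ω' : Ω'} {t : ℕ}
    (h : ∀ i < t, w i ω = w' i ω') : sgdErr η δ0 w t ω = sgdErr η δ0 w' t ω' := by
  induction t with
  | zero => rfl
  | succ t ih =>
    simp only [sgdErr]
    rw [ih fun i hi => h i (by omega), h t (by omega)]

lemma measurable_sgdErr [MeasurableSpace Ω] {w : ℕ → Ω → ℝ} (hw : ∀ i, Measurable (w i))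
    (t : ℕ) : Measurable (sgdErr η δ0 w t) := by
  induction t with
  | zero => exact measurable_const
  | succ t ih => exact (ih.const_mul _).sub ((hw t).const_mul _)

/-- `δ^{(t)}` is a measurable function of `w^{(0)}, …, w^{(t-1)}`. -/
lemma indepFun_sgdErr [MeasurableSpace Ω] {P : Measure Ω} {w : ℕ → Ω → ℝ}
    (hindep : iIndepFun w P) (hw : ∀ i, AEMeasurable (w i) P) (t : ℕ) :
    IndepFun (sgdErr η δ0 w t) (w t) P := by
  classical
  let past : ℕ → (Finset.range t → ℝ) → ℝ :=
    fun i x => if h : i ∈ Finset.range t then x ⟨i, h⟩ else 0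
  have hpast : ∀ i, Measurable (past i) := fun i => by
    dsimp only [past]
    split_ifs
    exacts [measurable_pi_apply _, measurable_const]
  have := (hindep.indepFun_finset₀ (Finset.range t) {t} (by simp) hw).comp
    (measurable_sgdErr (η := η) (δ0 := δ0) hpast t) (measurable_pi_apply ⟨t, by simp⟩)
  convert this using 1
  · funext ω
    exact sgdErr_congr fun i hi => by simp [past, hi]
  · rfl

noncomputable def sgdVar (η : ℝ) : ℕ → ℝ≥0
  | 0 => 0
  | t + 1 => ⟨(1 - η) ^ 2, sq_nonneg _⟩ * sgdVar η t + ⟨η ^ 2, sq_nonneg _⟩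

lemma coe_sgdVar (hη : η ≠ 2) (t : ℕ) :
    (sgdVar η t : ℝ) = η * (1 - (1 - η) ^ (2 * t)) / (2 - η) := by
  have h2 : (2 : ℝ) - η ≠ 0 := sub_ne_zero.mpr (Ne.symm hη)
  induction t with
  | zero => simp [sgdVar]
  | succ t ih =>
    have hstep : (sgdVar η (t + 1) : ℝ) = (1 - η) ^ 2 * sgdVar η t + η ^ 2 := rfl
    rw [hstep, ih]
    field_simp
    ring

lemma hasLaw_sgdErr [MeasurableSpace Ω] {P : Measure Ω} [IsProbabilityMeasure P]
    {w : ℕ → Ω → ℝ} (hindep : iIndepFun w P) (hw : ∀ i, HasLaw (w i) (gaussianReal 0 1) P)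
    (t : ℕ) : HasLaw (sgdErr η δ0 w t) (gaussianReal ((1 - η) ^ t * δ0) (sgdVar η t)) P := by
  induction t with
  | zero => exact ⟨aemeasurable_const, by simp [sgdErr, sgdVar, gaussianReal_zero_var]⟩
  | succ t ih =>
    have hsplit : sgdErr η δ0 w (t + 1)
        = (fun ω => (1 - η) * sgdErr η δ0 w t ω) + fun ω => -η * w t ω := by
      funext ω
      simp only [sgdErr, Pi.add_apply]
      ring
    have hXY := (indepFun_sgdErr (η := η) (δ0 := δ0) hindep (fun i => (hw i).aemeasurable) t).comp
      (measurable_const_mul (1 - η)) (measurable_const_mul (-η))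
    rw [hsplit]
    convert hXY.hasLaw_add (gaussianReal_const_mul ih _) (gaussianReal_const_mul (hw t) _) using 1
    rw [gaussianReal_conv_gaussianReal]
    congr 1
    · ring
    · ext
      simp only [NNReal.coe_add, NNReal.coe_mul, NNReal.coe_mk, even_two,
        Even.neg_pow, mul_one]
      rfl

lemma sgdVar_le (hη0 : 0 ≤ η) (hη1 : η ≤ 1) (t : ℕ) : (sgdVar η t : ℝ) ≤ η := by
  have hdecay : 0 ≤ (1 - η) ^ (2 * t) := pow_nonneg (by linarith) _
  rw [coe_sgdVar (by linarith), div_le_iff₀ (by linarith)]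
  nlinarith

lemma le_sgdVar (hη0 : 0 ≤ η) (hη1 : η < 2) {t : ℕ} (hdecay : (1 - η) ^ (2 * t) ≤ 1 / 2) :
    η / 4 ≤ sgdVar η t := by
  rw [coe_sgdVar hη1.ne, le_div_iff₀ (by linarith)]
  nlinarith

lemma abs_pow_mul_le_sqrt {γ : ℝ} (hη1 : η ≤ 1) (hδ0 : |δ0| ≤ 1) {t : ℕ}
    (hdecay : (1 - η) ^ (2 * t) ≤ γ) : |(1 - η) ^ t * δ0| ≤ √γ := by
  have hpow : 0 ≤ (1 - η) ^ t := pow_nonneg (by linarith) t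
  calc |(1 - η) ^ t * δ0| = (1 - η) ^ t * |δ0| := by rw [abs_mul, abs_of_nonneg hpow]
    _ ≤ (1 - η) ^ t := mul_le_of_le_one_right hpow hδ0
    _ = √((1 - η) ^ (2 * t)) := by rw [pow_mul', sqrt_sq hpow]
    _ ≤ √γ := sqrt_le_sqrt hdecay

end SGDLaw

section Cliff

variable {ε C γ : ℝ}

noncomputable def cliffGap (ε C x : ℝ) : ℝ := if |x| ≤ ε then x ^ 2 else C

lemma cliffJ_self_sub_cliffJ_add (μ x : ℝ) (hε : 0 ≤ ε) :
    cliffJ μ ε C μ - cliffJ μ ε C (μ + x) = cliffGap ε C x := by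
  simp only [cliffJ, cliffGap, sub_self, abs_zero, hε, if_true, add_sub_cancel_left]
  split_ifs <;> ring

lemma measurable_cliffGap : Measurable (cliffGap ε C) :=
  Measurable.ite (measurableSet_le (by fun_prop) measurable_const) (by fun_prop) measurable_const

lemma cliffGap_nonneg (hC : 0 ≤ C) (x : ℝ) : 0 ≤ cliffGap ε C x := by
  unfold cliffGap
  split_ifs <;> positivity

lemma cliffGap_le (hεC : ε ^ 2 ≤ C) (x : ℝ) : cliffGap ε C x ≤ C := by
  unfold cliffGap
  split_ifs with hx
  · exact (sq_le_sq' (abs_le.mp hx).1 (abs_le.mp hx).2).trans hεC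
  · rfl

lemma indicator_compl_Icc_le_cliffGap (hεC : ε ^ 2 ≤ C) (x : ℝ) :
    (Set.Icc (-ε) ε)ᶜ.indicator (fun _ => C) x ≤ cliffGap ε C x := by
  have hC : 0 ≤ C := (sq_nonneg ε).trans hεC
  by_cases hx : x ∈ Set.Icc (-ε) ε
  · exact (Set.indicator_of_notMem (by simpa using hx) _).trans_le (cliffGap_nonneg hC x)
  · rw [Set.indicator_of_mem hx, cliffGap, if_neg (by rwa [abs_le, ← Set.mem_Icc])]

lemma half_le_integral_cliffGap {ν : Measure ℝ} [IsProbabilityMeasure ν] (hεC : ε ^ 2 ≤ C)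
    (hν : ν.real (Set.Icc (-ε) ε) ≤ 1 / 2) : C / 2 ≤ ∫ x, cliffGap ε C x ∂ν := by
  have hC : 0 ≤ C := (sq_nonneg ε).trans hεC
  have hint : Integrable (cliffGap ε C) ν := by
    refine .of_bound measurable_cliffGap.aestronglyMeasurable C (.of_forall fun x => ?_)
    rw [Real.norm_eq_abs, abs_le]
    exact ⟨(neg_nonpos.mpr hC).trans (cliffGap_nonneg hC x), cliffGap_le hεC x⟩
  calc C / 2 ≤ (1 - ν.real (Set.Icc (-ε) ε)) * C := by nlinarith
    _ = ∫ x, (Set.Icc (-ε) ε)ᶜ.indicator (fun _ => C) x ∂ν := by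
      rw [integral_indicator_const _ measurableSet_Icc.compl, measureReal_compl measurableSet_Icc,
        probReal_univ, smul_eq_mul]
    _ ≤ ∫ x, cliffGap ε C x ∂ν :=
      integral_mono ((integrable_const C).indicator measurableSet_Icc.compl) hint
        (indicator_compl_Icc_le_cliffGap hεC)

lemma measureReal_Icc_sqrt_le_measureReal_cliffGap_le {ν : Measure ℝ} [IsFiniteMeasure ν]
    (hγ : 0 ≤ γ) (hγε : √γ ≤ ε) :
    ν.real (Set.Icc (-√γ) √γ) ≤ ν.real {x | cliffGap ε C x ≤ γ} := by
  refine measureReal_mono fun x hx => ?_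
  have hxγ : |x| ≤ √γ := abs_le.mpr hx
  change cliffGap ε C x ≤ γ
  rw [cliffGap, if_pos (hxγ.trans hγε)]
  calc x ^ 2 = |x| ^ 2 := (sq_abs x).symm
    _ ≤ √γ ^ 2 := by gcongr
    _ = γ := sq_sqrt hγ

end Cliff

/-- For the one-dimensional cliff loss `J` with parameters `C ≫ ε² > 0` and the
mean-estimation SGD iterates with `σ² = 1`, `b ≤ 1`, a constant step size `η ≥ c₁ε²`, and
`γ ≤ c₂ε²` with `(1−γ)^{2T} ≤ γ` (for suitable universal constants `c₁, c₂`): there is a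
universal constant `c₉ > 0` such that, even though `E[J(θ*) − J(θ^{(T)})] ≥ C/2`, the random SGD
iterate satisfies `P(J(θ*) − J(θ^{(T)}) ≤ γ) ≥ c₉·γ/η`. -/
theorem cliff_loss_sgd_good_with_small_probability :
    ∃ c₁ c₂ c₉ : ℝ, 0 < c₁ ∧ 0 < c₂ ∧ 0 < c₉ ∧
      ∀ (Ω : Type) (_ : MeasureSpace Ω) (_ : IsProbabilityMeasure (ℙ : Measure Ω))
        (w : ℕ → Ω → ℝ),
        iIndepFun w ℙ →
        (∀ t, Measure.map (w t) ℙ = gaussianReal 0 1) →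
        ∀ (μ ε C η γ δ0 b : ℝ) (T : ℕ),
          0 < ε → ε ^ 2 ≤ C →
          η ∈ Set.Ioc (0 : ℝ) (1 / 2) → γ ∈ Set.Ioc (0 : ℝ) (1 / 2) →
          |δ0| = b → b ≤ 1 →
          c₁ * ε ^ 2 ≤ η → γ ≤ c₂ * ε ^ 2 → (1 - γ) ^ (2 * T) ≤ γ →
          (∫ ω, (cliffJ μ ε C μ - cliffJ μ ε C (μ + sgdErr η δ0 w T ω))) ≥ C / 2 ∧
          (ℙ {ω | cliffJ μ ε C μ - cliffJ μ ε C (μ + sgdErr η δ0 w T ω) ≤ γ}).toReal ≥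
            c₉ * γ / η := by
  refine ⟨100, 1 / 100, 1 / 3, by norm_num, by norm_num, by norm_num, ?_⟩
  rintro Ω _ _ w hindep hlaw μ ε C η γ δ0 b T hε hεC ⟨hη0, hη⟩ ⟨hγ0, -⟩ hb hb1 hc₁ hc₂ hT
  have hw : ∀ t, HasLaw (w t) (gaussianReal 0 1) :=
    fun t => ⟨.of_map_ne_zero (by simp [hlaw t, NeZero.ne]), hlaw t⟩
  have hδ := hasLaw_sgdErr (η := η) (δ0 := δ0) hindep hw T
  have hγη : 10000 * γ ≤ η := by nlinarith
  have hdecay : (1 - η) ^ (2 * T) ≤ γ :=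
    (pow_le_pow_left₀ (by linarith) (by linarith) _).trans hT
  have hv_le := sgdVar_le hη0.le (by linarith) T
  have hv_ge := le_sgdVar hη0.le (by linarith) (hdecay.trans (by linarith))
  have hm := abs_pow_mul_le_sqrt (by linarith) (hb ▸ hb1) hdecay
  simp only [cliffJ_self_sub_cliffJ_add μ _ hε.le]
  constructor
  · have hmean := hδ.integral_comp (measurable_cliffGap (ε := ε) (C := C)).aestronglyMeasurable
    rw [Function.comp_def] at hmean
    rw [ge_iff_le, hmean]
    exact half_le_integral_cliffGap hεC (gaussianReal_real_Icc_le_half hε (by nlinarith))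
  · rw [ge_iff_le, ← measureReal_def,
      hδ.measureReal_eq (measurableSet_le measurable_cliffGap measurable_const)]
    calc 1 / 3 * γ / η = γ / (3 * η) := by ring
      _ ≤ _ := div_le_gaussianReal_real_Icc_sqrt hγ0 hm (by linarith) hv_le (by linarith)
      _ ≤ _ := measureReal_Icc_sqrt_le_measureReal_cliffGap_le hγ0.le
        ((sqrt_le_sqrt (by nlinarith)).trans_eq (sqrt_sq hε.le))
end
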